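/- Let S be a finite set of states and A a finite set of actions. Fix a deterministic transition function B : S × A → S, a deterministic expert a* : S → A, an initial state s₀ ∈ S, and a stochastic policy π̂ : S → PMF A. Define the expert's trajectory s*_1 = s₀, s*_{t+1} = B(s*_t, a*(s*_t)). Suppose that for each t with 1 ≤ t ≤ T, the learner's disagreement probability on the expert's state at step t satisfies 1 − π̂(s*_t)(a*(s*_t)) ≤ ε_t. Then the probability that a trajectory generated by the learner π̂ from s₀ (sampling a_t ∼ π̂(s_t), s_{t+1} = B(s_t, a_t)) agrees with the expert's actions at every step t = 1, …, T is at least 1 − Σ_{t=1}^T ε_t; in particular, if ε_t ≤ ε for all t, this probability is at least 1 − Tε. -/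
import Mathlib


open scoped BigOperators ENNReal

/-- The probability that a learner following stochastic policy `π` in the MDP with
deterministic transition function `B`, starting from state `s`, generates exactly the
action sequence `as` (sampling `a_t ∼ π(s_t)` and transitioning `s_{t+1} = B(s_t, a_t)`). -/
noncomputable def trajProb {S A : Type*} (B : S → A → S) (π : S → PMF A) :
    S → List A → ℝ≥0∞
  | _, [] => 1
  | s, a :: rest => π s a * trajProb B π (B s a) rest

/-- The expert's trajectory: `s*_1 = s₀` (index 0 here), `s*_{t+1} = B(s*_t, a*(s*_t))`. -/
def expertTraj {S A : Type*} (B : S → A → S) (astar : S → A) (s₀ : S) : ℕ → S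
  | 0 => s₀
  | t + 1 => B (expertTraj B astar s₀ t) (astar (expertTraj B astar s₀ t))

private lemma trajProb_expert {S A : Type*} (B : S → A → S) (astar : S → A) (s₀ : S)
    (πhat : S → PMF A) :
    ∀ (n k : ℕ),
      trajProb B πhat (expertTraj B astar s₀ k)
        ((List.range n).map (fun t => astar (expertTraj B astar s₀ (k + t)))) =
      ∏ t ∈ Finset.range n,
        πhat (expertTraj B astar s₀ (k + t)) (astar (expertTraj B astar s₀ (k + t))) := by
  intro n
  induction n with
  | zero => intro k; simp [trajProb]
  | succ n ih =>
    intro k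
    rw [List.range_succ_eq_map]
    simp only [List.map_cons, List.map_map]
    rw [trajProb]
    have hstep : B (expertTraj B astar s₀ k) (astar (expertTraj B astar s₀ (k + 0)))
        = expertTraj B astar s₀ (k + 1) := by simp [expertTraj]
    rw [Finset.prod_range_succ']
    have := ih (k + 1)
    simp only [Nat.add_zero] at hstep ⊢
    rw [hstep]
    have hmap : ((List.range n).map ((fun t => astar (expertTraj B astar s₀ (k + t))) ∘ Nat.succ))
        = (List.range n).map (fun t => astar (expertTraj B astar s₀ (k + 1 + t))) := by
      apply List.map_congr_left
      intro x _
      simp [Function.comp, Nat.succ_eq_add_one]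
      ring_nf
    rw [hmap, this]
    rw [mul_comm]
    congr 1
    apply Finset.prod_congr rfl
    intro x _
    ring_nf

private lemma one_sub_sum_le_prod (n : ℕ) (q : ℕ → ℝ) (h0 : ∀ t, 0 ≤ q t) (h1 : ∀ t, q t ≤ 1) :
    1 - ∑ t ∈ Finset.range n, (1 - q t) ≤ ∏ t ∈ Finset.range n, q t := by
  induction n with
  | zero => simp
  | succ n ih =>
    rw [Finset.sum_range_succ, Finset.prod_range_succ]
    have hq := h0 n
    have hq1 := h1 n
    have hprod0 : (0:ℝ) ≤ ∏ t ∈ Finset.range n, q t :=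
      Finset.prod_nonneg fun t _ => h0 t
    have hprod1 : ∏ t ∈ Finset.range n, q t ≤ 1 :=
      Finset.prod_le_one (fun t _ => h0 t) (fun t _ => h1 t)
    nlinarith [ih]

/-- If at each step `t = 1, …, T` the learner `π̂`'s disagreement probability with the
deterministic expert `a*` on the expert's state `s*_t` is at most `ε_t`, then the
probability that the learner's trajectory from `s₀` agrees with the expert's actions at
every step is at least `1 − Σ_{t=1}^T ε_t`; in particular, if `ε_t ≤ ε` for all `t`,
this probability is at least `1 − T ε`. -/
theorem agreement_probability_union_bound
    {S A : Type*} [Fintype S] [Fintype A] [Nonempty S] [Nonempty A]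
    (B : S → A → S) (astar : S → A) (s₀ : S) (πhat : S → PMF A)
    (T : ℕ) (ε : ℕ → ℝ)
    (h : ∀ t < T,
      1 - (πhat (expertTraj B astar s₀ t) (astar (expertTraj B astar s₀ t))).toReal ≤ ε t) :
    1 - ∑ t ∈ Finset.range T, ε t ≤
        (trajProb B πhat s₀
          ((List.range T).map (fun t => astar (expertTraj B astar s₀ t)))).toReal ∧
      ∀ εbar : ℝ, (∀ t < T, ε t ≤ εbar) →
        1 - (T : ℝ) * εbar ≤
          (trajProb B πhat s₀
            ((List.range T).map (fun t => astar (expertTraj B astar s₀ t)))).toReal := by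
  set q : ℕ → ℝ := fun t =>
    (πhat (expertTraj B astar s₀ t) (astar (expertTraj B astar s₀ t))).toReal with hq
  have htp : (trajProb B πhat s₀
      ((List.range T).map (fun t => astar (expertTraj B astar s₀ t)))).toReal
      = ∏ t ∈ Finset.range T, q t := by
    have := trajProb_expert B astar s₀ πhat T 0
    simp only [Nat.zero_add] at this
    have h0 : expertTraj B astar s₀ 0 = s₀ := rfl
    rw [h0] at this
    rw [this, ENNReal.toReal_prod]
  have hq0 : ∀ t, 0 ≤ q t := fun t => ENNReal.toReal_nonneg
  have hq1 : ∀ t, q t ≤ 1 := by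
    intro t
    have := PMF.coe_le_one (πhat (expertTraj B astar s₀ t)) (astar (expertTraj B astar s₀ t))
    exact ENNReal.toReal_le_of_le_ofReal zero_le_one (by simpa using this)
  have key : 1 - ∑ t ∈ Finset.range T, (1 - q t) ≤
      (trajProb B πhat s₀
        ((List.range T).map (fun t => astar (expertTraj B astar s₀ t)))).toReal := by
    rw [htp]; exact one_sub_sum_le_prod T q hq0 hq1
  have hsum : ∑ t ∈ Finset.range T, (1 - q t) ≤ ∑ t ∈ Finset.range T, ε t := by
    apply Finset.sum_le_sum
    intro t ht
    exact h t (Finset.mem_range.mp ht)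
  constructor
  · linarith
  · intro εbar hεbar
    have : ∑ t ∈ Finset.range T, ε t ≤ (T : ℝ) * εbar := by
      calc ∑ t ∈ Finset.range T, ε t ≤ ∑ _t ∈ Finset.range T, εbar :=
            Finset.sum_le_sum fun t ht => hεbar t (Finset.mem_range.mp ht)
        _ = (T : ℝ) * εbar := by simp [Finset.sum_const, nsmul_eq_mul]
    linarith
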